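/- Let Γ=(N,E) be a graph and (N,v_a) the attachment game v_a(S) = 2(|S|−1). For every edge e ∈ E and every L ⊆ E∖{e}, the marginal contribution of e to L in the link game w^a equals 0 if L∪{e} contains a cycle through e, and equals 2 otherwise. Consequently the link game (E, w^a) is concave. -/

import Mathlib

open scoped Classical

noncomputable section

variable {V : Type*} [Fintype V] [DecidableEq V]

/-- The vertex set of the connected component of `i` in the graph with edge set `L`. -/
def comp (L : Finset (Sym2 V)) (i : V) : Finset V :=
  Finset.univ.filter fun j =>
    (SimpleGraph.fromEdgeSet (↑L : Set (Sym2 V))).Reachable i j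

/-- Nodes covered by the edge set `L` (the node set `N[L]`). -/
def covered (L : Finset (Sym2 V)) : Finset V :=
  Finset.univ.filter fun i => ∃ e ∈ L, i ∈ e

/-- The collection of (vertex sets of) connected components of the edge-induced
subgraph `Γ_L = (N[L], L)`. -/
def comps (L : Finset (Sym2 V)) : Finset (Finset V) :=
  (covered L).image (comp L)

/-- The link game `w^v` associated with the game `v` and an edge set. -/
def linkGame (v : Finset V → ℝ) (L : Finset (Sym2 V)) : ℝ :=
  ∑ C ∈ comps L, v C

/-- Shapley value of player `e` in the game `w` with player set `E`. -/
def shapley {α : Type*} [DecidableEq α] (E : Finset α) (w : Finset α → ℝ) (e : α) : ℝ :=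
  ∑ L ∈ (E.erase e).powerset,
    ((L.card.factorial : ℝ) * ((E.card - L.card - 1).factorial : ℝ) / (E.card.factorial : ℝ)) *
      (w (insert e L) - w L)

/-- Harsanyi dividend of coalition `L` in the game `w`. -/
def dividend {α : Type*} [DecidableEq α] (w : Finset α → ℝ) (L : Finset α) : ℝ :=
  ∑ T ∈ L.powerset, (-1 : ℝ) ^ (L.card - T.card) * w T

/-- The position value of node `i` in the communication situation `(N, v, E)`. -/
def positionValue (v : Finset V → ℝ) (E : Finset (Sym2 V)) (i : V) : ℝ :=
  (1 / 2) * ∑ e ∈ E.filter (fun e => i ∈ e), shapley E (linkGame v) e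

def Superadditive (v : Finset V → ℝ) : Prop :=
  ∀ S T : Finset V, Disjoint S T → v S + v T ≤ v (S ∪ T)

def ConvexGame (v : Finset V → ℝ) : Prop :=
  ∀ S T : Finset V, v S + v T ≤ v (S ∪ T) + v (S ∩ T)

def ZeroNormalized (v : Finset V → ℝ) : Prop :=
  v ∅ = 0 ∧ ∀ i : V, v {i} = 0

def SymmetricGame (v : Finset V → ℝ) (f : ℕ → ℝ) : Prop :=
  ∀ S : Finset V, v S = f S.card

/-- An edge set without loops. -/
def SimpleEdges (E : Finset (Sym2 V)) : Prop := ∀ e ∈ E, ¬ e.IsDiag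

/-- The edge-induced subgraph `Γ_L = (N[L], L)` is connected. -/
def EdgeConnected (L : Finset (Sym2 V)) : Prop :=
  ∀ i ∈ covered L, ∀ j ∈ covered L,
    (SimpleGraph.fromEdgeSet (↑L : Set (Sym2 V))).Reachable i j

/-- Component of `i` in the subgraph of `Γ_L` induced on the vertex set `S`. -/
def compIn (L : Finset (Sym2 V)) (S : Finset V) (i : V) : Finset V :=
  S.filter fun j =>
    (SimpleGraph.fromEdgeSet
      (↑(L.filter fun e => ∀ x ∈ e, x ∈ S) : Set (Sym2 V))).Reachable i j

/-- Number of connected components of the subgraph of `Γ_L` induced on `S`. -/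
def numCompsIn (L : Finset (Sym2 V)) (S : Finset V) : ℕ :=
  (S.image (compIn L S)).card

/-- A cutvertex of `Γ_L`: a vertex whose removal increases the number of components. -/
def IsCutvertex (L : Finset (Sym2 V)) (i : V) : Prop :=
  i ∈ covered L ∧ numCompsIn L (covered L) < numCompsIn L ((covered L).erase i)

/-- The set of cutedges of `L`: edges both of whose endpoints are cutvertices. -/
def cutedges (L : Finset (Sym2 V)) : Finset (Sym2 V) :=
  L.filter fun e => ∀ x ∈ e, IsCutvertex L x

/-- The attachment game `v_a(S) = 2(|S| - 1)` (and `v_a(∅) = 0`). -/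
def va : Finset V → ℝ := fun S => if S = ∅ then 0 else 2 * ((S.card : ℝ) - 1)

/-- The star on `V` with hub `c`: all (non-loop) edges incident to `c`. -/
def starEdges (c : V) : Finset (Sym2 V) :=
  Finset.univ.filter fun e => ¬ e.IsDiag ∧ c ∈ e

/-- The chain (path) on `Fin n`, with edges `{i, i+1}`. -/
def chainEdges (n : ℕ) : Finset (Sym2 (Fin n)) :=
  Finset.univ.filter fun e => ∃ i j : Fin n, e = s(i, j) ∧ (j : ℕ) = (i : ℕ) + 1

/-- `F(s, r) = ∑_{k=0}^{r} (-1)^k C(r,k) f(s-k)` for `f : ℕ → ℝ`. -/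
def Ffun (f : ℕ → ℝ) (s r : ℕ) : ℝ :=
  ∑ k ∈ Finset.range (r + 1), (-1 : ℝ) ^ k * (r.choose k : ℝ) * f (s - k)

/-- `F(s, r) = ∑_{k=0}^{r} (-1)^k C(r,k) f(s-k)` for `f : ℝ → ℝ`. -/
def FfunR (f : ℝ → ℝ) (s r : ℕ) : ℝ :=
  ∑ k ∈ Finset.range (r + 1), (-1 : ℝ) ^ k * (r.choose k : ℝ) * f ((s : ℝ) - (k : ℝ))


section Helpers

private abbrev Gr (L : Finset (Sym2 V)) : SimpleGraph V :=
  SimpleGraph.fromEdgeSet (↑L : Set (Sym2 V))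

private lemma mem_comp' {L : Finset (Sym2 V)} {i j : V} :
    j ∈ comp L i ↔ (Gr L).Reachable i j := by
  simp [comp]

private lemma self_mem_comp' (L : Finset (Sym2 V)) (i : V) : i ∈ comp L i :=
  mem_comp'.mpr (SimpleGraph.Reachable.refl i)

private lemma covered_of_reach' {L : Finset (Sym2 V)} {a b : V}
    (h : (Gr L).Reachable a b) (hne : a ≠ b) : a ∈ covered L := by
  obtain ⟨w⟩ := h
  cases w with
  | nil => exact absurd rfl hne
  | cons h p =>
    rw [SimpleGraph.fromEdgeSet_adj] at h
    simp only [covered, Finset.mem_filter, Finset.mem_univ, true_and]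
    exact ⟨_, Finset.mem_coe.mp h.1, Sym2.mem_mk_left _ _⟩

private lemma comp_congr' {L : Finset (Sym2 V)} {a b : V}
    (h : (Gr L).Reachable a b) : comp L a = comp L b := by
  ext x
  simp only [mem_comp']
  exact ⟨fun hx => h.symm.trans hx, fun hx => h.trans hx⟩

private lemma reach_of_comp_eq' {L : Finset (Sym2 V)} {a b : V}
    (h : comp L a = comp L b) : (Gr L).Reachable a b :=
  mem_comp'.mp (h ▸ self_mem_comp' L b)

private lemma comp_disjoint' {L : Finset (Sym2 V)} {a b : V}
    (h : comp L a ≠ comp L b) : Disjoint (comp L a) (comp L b) := by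
  rw [Finset.disjoint_left]
  intro x hxa hxb
  exact h (comp_congr' ((mem_comp'.mp hxa).trans (mem_comp'.mp hxb).symm))

private lemma linkGame_va (L : Finset (Sym2 V)) :
    linkGame (va (V := V)) L =
      2 * (Fintype.card V : ℝ) - 2 * ((Finset.univ.image (comp L)).card : ℝ) := by
  classical
  set full : Finset (Finset V) := Finset.univ.image (comp L) with hfull
  have hsub : comps L ⊆ full := Finset.image_subset_image (Finset.subset_univ _)
  have hzero : ∀ C ∈ full, C ∉ comps L → va C = 0 := by
    intro C hC hnC
    obtain ⟨k, -, rfl⟩ := Finset.mem_image.mp hC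
    have hk : comp L k = {k} := by
      apply Finset.eq_singleton_iff_unique_mem.mpr
      refine ⟨self_mem_comp' L k, fun m hm => ?_⟩
      by_contra hne
      have hcov : k ∈ covered L :=
        covered_of_reach' (mem_comp'.mp hm) (fun hkm => hne (hkm.symm ▸ rfl))
      exact hnC (Finset.mem_image_of_mem _ hcov)
    rw [hk]
    simp [va]
  have hstep : linkGame (va (V := V)) L = ∑ C ∈ full, va C :=
    Finset.sum_subset hsub hzero
  have hva : ∀ C ∈ full, va C = 2 * ((C.card : ℝ) - 1) := by
    intro C hC
    obtain ⟨k, -, rfl⟩ := Finset.mem_image.mp hC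
    have hne : comp L k ≠ ∅ := Finset.ne_empty_of_mem (self_mem_comp' L k)
    simp [va, hne]
  have hdisj : ∀ C ∈ full, ∀ C' ∈ full, C ≠ C' → Disjoint (id C) (id C') := by
    intro C hC C' hC' hne
    obtain ⟨a, -, rfl⟩ := Finset.mem_image.mp hC
    obtain ⟨b, -, rfl⟩ := Finset.mem_image.mp hC'
    exact comp_disjoint' hne
  have hbi : full.biUnion id = Finset.univ := by
    apply Finset.eq_univ_of_forall
    intro k
    exact Finset.mem_biUnion.mpr ⟨comp L k, Finset.mem_image_of_mem _ (Finset.mem_univ k),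
      self_mem_comp' L k⟩
  have hcardsum : ∑ C ∈ full, C.card = Fintype.card V := by
    have := Finset.card_biUnion hdisj
    rw [hbi, Finset.card_univ] at this
    exact this.symm
  have hcards : ∑ C ∈ full, (C.card : ℝ) = (Fintype.card V : ℝ) := by
    rw [← Nat.cast_sum, hcardsum]
  rw [hstep, Finset.sum_congr rfl hva]
  simp only [mul_sub, mul_one]
  rw [Finset.sum_sub_distrib, ← Finset.mul_sum, hcards, Finset.sum_const, nsmul_eq_mul,
    mul_comm ((full.card : ℝ)) 2]

private lemma reach_insert_iff {i j : V} (hij : i ≠ j) (L : Finset (Sym2 V)) (a b : V) :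
    (Gr (insert s(i, j) L)).Reachable a b ↔
      (Gr L).Reachable a b ∨ ((Gr L).Reachable a i ∧ (Gr L).Reachable j b) ∨
        ((Gr L).Reachable a j ∧ (Gr L).Reachable i b) := by
  constructor
  · intro h
    obtain ⟨w⟩ := h
    induction w with
    | nil => exact Or.inl (SimpleGraph.Reachable.refl _)
    | cons h p ih =>
      rw [SimpleGraph.fromEdgeSet_adj, Finset.coe_insert, Set.mem_insert_iff] at h
      obtain ⟨hm | hm, hne⟩ := h
      · rw [Sym2.eq_iff] at hm
        rcases hm with ⟨rfl, rfl⟩ | ⟨rfl, rfl⟩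
        · rcases ih with h1 | ⟨h1, h2⟩ | ⟨h1, h2⟩
          · exact Or.inr (Or.inl ⟨SimpleGraph.Reachable.refl _, h1⟩)
          · exact Or.inr (Or.inl ⟨SimpleGraph.Reachable.refl _, h2⟩)
          · exact Or.inl h2
        · rcases ih with h1 | ⟨h1, h2⟩ | ⟨h1, h2⟩
          · exact Or.inr (Or.inr ⟨SimpleGraph.Reachable.refl _, h1⟩)
          · exact Or.inl h2
          · exact Or.inr (Or.inr ⟨SimpleGraph.Reachable.refl _, h2⟩)
      · have huv : (Gr L).Reachable _ _ :=
          ((SimpleGraph.fromEdgeSet_adj _).mpr ⟨hm, hne⟩).reachable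
        rcases ih with h1 | ⟨h1, h2⟩ | ⟨h1, h2⟩
        · exact Or.inl (huv.trans h1)
        · exact Or.inr (Or.inl ⟨huv.trans h1, h2⟩)
        · exact Or.inr (Or.inr ⟨huv.trans h1, h2⟩)
  · have hmono : ∀ {x y : V}, (Gr L).Reachable x y → (Gr (insert s(i, j) L)).Reachable x y := by
      intro x y h
      exact h.mono (SimpleGraph.fromEdgeSet_mono
        (by rw [Finset.coe_insert]; exact Set.subset_insert _ _))
    have hijr : (Gr (insert s(i, j) L)).Reachable i j :=
      ((SimpleGraph.fromEdgeSet_adj _).mpr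
        ⟨by rw [Finset.coe_insert]; exact Set.mem_insert _ _, hij⟩).reachable
    rintro (h | ⟨h1, h2⟩ | ⟨h1, h2⟩)
    · exact hmono h
    · exact ((hmono h1).trans hijr).trans (hmono h2)
    · exact ((hmono h1).trans hijr.symm).trans (hmono h2)

private lemma ncomp_insert_of_reach {i j : V} (hij : i ≠ j) {L : Finset (Sym2 V)}
    (h : (Gr L).Reachable i j) :
    Finset.univ.image (comp (insert s(i, j) L)) = Finset.univ.image (comp L) := by
  have hc : comp (insert s(i, j) L) = comp L := by
    funext k
    ext b
    simp only [mem_comp']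
    rw [reach_insert_iff hij]
    constructor
    · rintro (h1 | ⟨h1, h2⟩ | ⟨h1, h2⟩)
      · exact h1
      · exact h1.trans (h.trans h2)
      · exact h1.trans (h.symm.trans h2)
    · exact Or.inl
  rw [hc]

private lemma ncomp_insert_of_not_reach {i j : V} (hij : i ≠ j) {L : Finset (Sym2 V)}
    (h : ¬ (Gr L).Reachable i j) :
    (Finset.univ.image (comp L)).card
      = (Finset.univ.image (comp (insert s(i, j) L))).card + 1 := by
  classical
  set A : Finset V := Finset.univ.filter
    (fun k => (Gr L).Reachable k i ∨ (Gr L).Reachable k j) with hA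
  set B : Finset V := Finset.univ.filter
    (fun k => ¬ ((Gr L).Reachable k i ∨ (Gr L).Reachable k j)) with hB
  have hmemA : ∀ k, k ∈ A ↔ ((Gr L).Reachable k i ∨ (Gr L).Reachable k j) := by
    intro k; simp [hA]
  have hmemB : ∀ k, k ∈ B ↔ ¬ ((Gr L).Reachable k i ∨ (Gr L).Reachable k j) := by
    intro k; simp [hB]
  have hsplit : (Finset.univ : Finset V) = A ∪ B :=
    (Finset.filter_union_filter_not_eq _ _).symm
  have hiA : i ∈ A := (hmemA i).mpr (Or.inl (SimpleGraph.Reachable.refl i))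
  have hjA : j ∈ A := (hmemA j).mpr (Or.inr (SimpleGraph.Reachable.refl j))
  set U : Finset V := comp L i ∪ comp L j with hU
  -- comp' is constant U on A
  have hcA : ∀ k ∈ A, comp (insert s(i, j) L) k = U := by
    intro k hk
    rcases (hmemA k).mp hk with hki | hkj
    · ext b
      simp only [hU, Finset.mem_union, mem_comp']
      rw [reach_insert_iff hij]
      constructor
      · rintro (h1 | ⟨h1, h2⟩ | ⟨h1, h2⟩)
        · exact Or.inl (hki.symm.trans h1)
        · exact Or.inr h2
        · exact Or.inl h2
      · rintro (hb | hb)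
        · exact Or.inl (hki.trans hb)
        · exact Or.inr (Or.inl ⟨hki, hb⟩)
    · ext b
      simp only [hU, Finset.mem_union, mem_comp']
      rw [reach_insert_iff hij]
      constructor
      · rintro (h1 | ⟨h1, h2⟩ | ⟨h1, h2⟩)
        · exact Or.inr (hkj.symm.trans h1)
        · exact Or.inr h2
        · exact Or.inl h2
      · rintro (hb | hb)
        · exact Or.inr (Or.inr ⟨hkj, hb⟩)
        · exact Or.inl (hkj.trans hb)
  have hcB : ∀ k ∈ B, comp (insert s(i, j) L) k = comp L k := by
    intro k hk
    have hk' := (hmemB k).mp hk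
    ext b
    simp only [mem_comp']
    rw [reach_insert_iff hij]
    constructor
    · rintro (h1 | ⟨h1, h2⟩ | ⟨h1, h2⟩)
      · exact h1
      · exact absurd (Or.inl h1) hk'
      · exact absurd (Or.inr h1) hk'
    · exact Or.inl
  have hUnotB : U ∉ B.image (comp L) := by
    intro hmem
    obtain ⟨k, hkB, hkU⟩ := Finset.mem_image.mp hmem
    have : k ∈ U := hkU ▸ self_mem_comp' L k
    rcases Finset.mem_union.mp this with hki | hkj
    · exact (hmemB k).mp hkB (Or.inl (mem_comp'.mp hki).symm)
    · exact (hmemB k).mp hkB (Or.inr (mem_comp'.mp hkj).symm)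
  have hinotB : comp L i ∉ B.image (comp L) := by
    intro hmem
    obtain ⟨k, hkB, hkE⟩ := Finset.mem_image.mp hmem
    exact (hmemB k).mp hkB (Or.inl (reach_of_comp_eq' hkE))
  have hjnotB : comp L j ∉ B.image (comp L) := by
    intro hmem
    obtain ⟨k, hkB, hkE⟩ := Finset.mem_image.mp hmem
    exact (hmemB k).mp hkB (Or.inr (reach_of_comp_eq' hkE))
  have hij' : comp L i ≠ comp L j := fun hc => h (reach_of_comp_eq' hc)
  -- image over univ of comp'
  have himg' : Finset.univ.image (comp (insert s(i, j) L))
      = insert U (B.image (comp L)) := by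
    rw [hsplit, Finset.image_union]
    have h1 : A.image (comp (insert s(i, j) L)) = {U} := by
      rw [Finset.image_congr (fun x hx => hcA x hx)]
      exact Finset.image_const ⟨i, hiA⟩ U
    have h2 : B.image (comp (insert s(i, j) L)) = B.image (comp L) :=
      Finset.image_congr (fun x hx => hcB x hx)
    rw [h1, h2, Finset.insert_eq]
  have himg : Finset.univ.image (comp L)
      = insert (comp L i) (insert (comp L j) (B.image (comp L))) := by
    rw [hsplit, Finset.image_union]
    have h1 : A.image (comp L) = {comp L i, comp L j} := by
      apply Finset.Subset.antisymm
      · intro C hC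
        obtain ⟨k, hkA, rfl⟩ := Finset.mem_image.mp hC
        rcases (hmemA k).mp hkA with hki | hkj
        · exact Finset.mem_insert.mpr (Or.inl (comp_congr' hki.symm).symm)
        · simp only [Finset.mem_insert, Finset.mem_singleton]
          exact Or.inr (comp_congr' hkj.symm).symm
      · intro C hC
        rcases Finset.mem_insert.mp hC with rfl | hC
        · exact Finset.mem_image_of_mem _ hiA
        · rw [Finset.mem_singleton.mp hC]
          exact Finset.mem_image_of_mem _ hjA
    rw [h1]
    rw [show ({comp L i, comp L j} : Finset (Finset V)) = insert (comp L i) {comp L j} from rfl]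
    rw [Finset.insert_union]
    congr 1
  rw [himg, himg']
  rw [Finset.card_insert_of_notMem hUnotB]
  rw [Finset.card_insert_of_notMem (by
    simp only [Finset.mem_insert]
    rintro (hc | hc)
    · exact hij' hc
    · exact hinotB hc)]
  rw [Finset.card_insert_of_notMem hjnotB]

private lemma marginal_eq (i j : V) (hij : i ≠ j) (L : Finset (Sym2 V)) :
    linkGame va (insert s(i, j) L) - linkGame va L =
      (if (SimpleGraph.fromEdgeSet (↑L : Set (Sym2 V))).Reachable i j
        then (0 : ℝ) else 2) := by
  rw [linkGame_va, linkGame_va]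
  split_ifs with h
  · rw [ncomp_insert_of_reach hij h]
    ring
  · rw [ncomp_insert_of_not_reach hij h]
    push_cast
    ring

end Helpers

/-- in the link game of the attachment game, the marginal contribution
of an edge is `0` if it closes a cycle (its endpoints are already connected) and `2`
otherwise; consequently the link game is concave. -/
theorem attachment_link_game_marginal (E : Finset (Sym2 V)) (hE : SimpleEdges E) :
    (∀ i j : V, i ≠ j → s(i, j) ∈ E → ∀ L ⊆ E.erase s(i, j),
        linkGame va (insert s(i, j) L) - linkGame va L =
          (if (SimpleGraph.fromEdgeSet (↑L : Set (Sym2 V))).Reachable i j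
            then 0 else 2)) ∧
      ∀ e ∈ E, ∀ L L' : Finset (Sym2 V), L ⊆ L' → L' ⊆ E.erase e →
        linkGame va (insert e L') - linkGame va L' ≤
          linkGame va (insert e L) - linkGame va L := by
  constructor
  · intro i j hij hmem L hL
    exact marginal_eq i j hij L
  · intro e he L L' hLL' hL'
    have hdiag : ¬ e.IsDiag := hE e he
    obtain ⟨⟨i, j⟩, rfl⟩ : ∃ p : V × V, s(p.1, p.2) = e :=
      Sym2.inductionOn (f := fun e => ∃ p : V × V, s(p.1, p.2) = e) e (fun a b => ⟨(a, b), rfl⟩)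
    have hij : i ≠ j := fun hc => hdiag (by simp [hc])
    rw [marginal_eq i j hij L, marginal_eq i j hij L']
    have hmono : (Gr L).Reachable i j → (Gr L').Reachable i j := fun h =>
      h.mono (SimpleGraph.fromEdgeSet_mono (by exact_mod_cast hLL'))
    split_ifs with h1 h2 h2
    · norm_num
    · norm_num
    · exact absurd (hmono h2) h1
    · norm_num

end
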